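/- arXiv:1609.09663 — 2 statements merged into one kernel-verified Lean document; each statement's English description precedes it below -/
import Mathlib

section
/- Let L be a lattice with least element 0 whose zero-divisor graph (vertices are nonzero elements x with x ∧ y = 0 for some nonzero y; edges join x,y with x ∧ y = 0) has nonempty vertex set. Then the zero-divisor graph is connected and its diameter is at most 3. -/
/-- An element is join-reducible if it is the join of two elements both different from it. -/
def JoinReducible {L : Type*} [Lattice L] (a : L) : Prop :=
  ∃ p q : L, p ≠ a ∧ q ≠ a ∧ p ⊔ q = a

/-- The set of nonzero zero-divisors of a lattice with least element. -/
def zdvSet (L : Type*) [Lattice L] [OrderBot L] : Set L :=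
  {x | x ≠ ⊥ ∧ ∃ y : L, y ≠ ⊥ ∧ x ⊓ y = ⊥}

/-- The zero-divisor graph of a lattice with least element. -/
def zdvGraph (L : Type*) [Lattice L] [OrderBot L] : SimpleGraph (zdvSet L) where
  Adj x y := x ≠ y ∧ (x : L) ⊓ (y : L) = ⊥
  symm := ⟨fun x y ⟨h1, h2⟩ => ⟨h1.symm, by rwa [inf_comm]⟩⟩
  loopless := ⟨fun x ⟨h1, _⟩ => h1 rfl⟩

/-! For vertices `u`, `v` pick nonzero `a`, `b` with `u ⊓ a = ⊥` and `v ⊓ b = ⊥`.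
Either `a ⊓ b = ⊥`, giving the path `u - a - b - v`, or `a ⊓ b`
is a nonzero element below both `a` and `b`, hence a common neighbour of `u` and `v`. -/

namespace zdvGraph

variable {L : Type*} [Lattice L] [OrderBot L]

theorem adj_of_inf_eq_bot {u v : zdvSet L} (h : (u : L) ⊓ v = ⊥) : (zdvGraph L).Adj u v :=
  ⟨fun huv => u.2.1 (by simpa [huv] using h), h⟩

theorem edist_le_three (u v : zdvSet L) : (zdvGraph L).edist u v ≤ 3 := by
  obtain ⟨hu, a, ha, hua⟩ := u.2
  obtain ⟨hv, b, hb, hvb⟩ := v.2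
  let a' : zdvSet L := ⟨a, ha, u, hu, by rwa [inf_comm]⟩
  let b' : zdvSet L := ⟨b, hb, v, hv, by rwa [inf_comm]⟩
  by_cases hab : a ⊓ b = ⊥
  · have hbv : (b' : L) ⊓ v = ⊥ := by rwa [inf_comm]
    let p : (zdvGraph L).Walk u v :=
      .cons (adj_of_inf_eq_bot (v := a') hua) <|
        .cons (adj_of_inf_eq_bot (u := a') (v := b') hab) <|
          .cons (adj_of_inf_eq_bot hbv) .nil
    exact (SimpleGraph.edist_le p).trans (by norm_num [p])
  · have huc : (u : L) ⊓ (a ⊓ b) = ⊥ :=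
      disjoint_iff.mp ((disjoint_iff.mpr hua).mono_right inf_le_left)
    have hcv : a ⊓ b ⊓ (v : L) = ⊥ :=
      disjoint_iff.mp ((disjoint_iff.mpr hvb).symm.mono_left inf_le_right)
    let c : zdvSet L := ⟨a ⊓ b, hab, v, hv, hcv⟩
    let p : (zdvGraph L).Walk u v :=
      .cons (adj_of_inf_eq_bot (v := c) huc) <| .cons (adj_of_inf_eq_bot (u := c) hcv) .nil
    exact (SimpleGraph.edist_le p).trans (by norm_num [p])

end zdvGraph

/-- If the zero-divisor graph of a lattice with 0 has a nonempty vertex set, then it is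
connected and its diameter is at most 3. -/
theorem stmt0 {L : Type*} [Lattice L] [OrderBot L] (h : (zdvSet L).Nonempty) :
    (zdvGraph L).Connected ∧ (zdvGraph L).ediam ≤ 3 := by
  have := h.to_subtype
  have hreach (u v : zdvSet L) : (zdvGraph L).Reachable u v :=
    SimpleGraph.edist_ne_top_iff_reachable.mp
      (ne_top_of_le_ne_top (by decide) (zdvGraph.edist_le_three u v))
  exact ⟨⟨hreach⟩, SimpleGraph.ediam_le_of_edist_le zdvGraph.edist_le_three⟩
end

section
/- Let T₁ and T₂ be finite rooted trees each of whose root has at least two children. Then the non-ancestor graphs G(T₁) and G(T₂) are isomorphic if and only if T₁ and T₂ are isomorphic as rooted trees. -/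
/-!
Adjacency in `nonAncestorGraph` is incomparability, so a graph isomorphism is a bijection of the
non-root vertices preserving comparability, and the root can be put back on top as a
lexicographic summand. It remains to see that in a finite forest order (one in which the
ancestors of every element form a chain) comparability determines the order up to isomorphism.
This goes by induction on the size. If some element is comparable to all others, these universal
elements form a chain lying above everything else, and a comparability-preserving bijection maps
them onto the universal elements of the other forest; the order is the lexicographic sum of the
rest and of this chain. Otherwise the down-set of a maximal element is a nonempty proper union of
comparability components, and the order is the disjoint sum of it and its complement.
-/

/-- The non-ancestor (incomparability) graph on the non-top elements of a partial order,
viewing the order as the ancestor order of a rooted tree with root the top element. -/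
def nonAncestorGraph (T : Type*) [PartialOrder T] [OrderTop T] :
    SimpleGraph {t : T // t ≠ ⊤} where
  Adj x y := ¬ (x : T) ≤ (y : T) ∧ ¬ (y : T) ≤ (x : T)
  symm := ⟨fun x y ⟨h1, h2⟩ => ⟨h2, h1⟩⟩
  loopless := ⟨fun x ⟨h1, _⟩ => h1 le_rfl⟩

open Relation

namespace OrderIso

variable {α : Type*} (p : α → Prop) [DecidablePred p]

def sumComplOfIncompRel [Preorder α] (h : ∀ a b, p a → ¬ p b → IncompRel (· ≤ ·) a b) :
    {a // p a} ⊕ {a // ¬ p a} ≃o α where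
  toEquiv := Equiv.sumCompl p
  map_rel_iff' := by
    rintro (⟨a, ha⟩ | ⟨a, ha⟩) (⟨b, hb⟩ | ⟨b, hb⟩)
    · simp
    · exact iff_of_false (h a b ha hb).not_le Sum.not_inl_le_inr
    · exact iff_of_false (h b a hb ha).not_ge Sum.not_inr_le_inl
    · simp

def sumLexComplOfLE [PartialOrder α] (h : ∀ a b, ¬ p a → p b → a ≤ b) :
    {a // ¬ p a} ⊕ₗ {a // p a} ≃o α where
  toEquiv := ofLex.trans ((Equiv.sumComm _ _).trans (Equiv.sumCompl p))
  map_rel_iff' := by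
    rintro (⟨a, ha⟩ | ⟨a, ha⟩) (⟨b, hb⟩ | ⟨b, hb⟩)
    · exact (Sum.Lex.inl_le_inl_iff (a := (⟨a, ha⟩ : {a // ¬ p a})) (b := ⟨b, hb⟩)).symm
    · exact iff_of_true (h a b ha hb) (Sum.Lex.inl_le_inr _ _)
    · exact iff_of_false (fun hab : a ≤ b => hb (le_antisymm hab (h b a hb ha) ▸ ha))
        Sum.Lex.not_inr_le_inl
    · exact (Sum.Lex.inr_le_inr_iff (a := (⟨a, ha⟩ : {a // p a})) (b := ⟨b, hb⟩)).symm

end OrderIso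

theorem nonempty_orderIso_of_forall_symmGen {α β : Type*} [PartialOrder α] [PartialOrder β]
    [Finite α] (hα : ∀ a b : α, SymmGen (· ≤ ·) a b) (hβ : ∀ a b : β, SymmGen (· ≤ ·) a b)
    (e : α ≃ β) : Nonempty (α ≃o β) := by
  classical
  let := linearOrderOfSymmGen hα
  let := linearOrderOfSymmGen hβ
  have := Fintype.ofFinite α
  have := Fintype.ofEquiv α e
  exact ⟨(Fintype.orderIsoFinOfCardEq α rfl).symm.trans
    (Fintype.orderIsoFinOfCardEq β (Fintype.card_congr e).symm)⟩

section Tree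

variable {α : Type*} [PartialOrder α]

theorem isChain_Ici_of_covBy_unique [WellFoundedGT α] [IsStronglyAtomic α]
    (h : ∀ a b c : α, a ⋖ b → a ⋖ c → b = c) (a : α) :
    IsChain (· ≤ ·) (Set.Ici a) := by
  induction a using WellFoundedGT.induction with
  | _ a ih =>
  intro b hab c hac hbc
  obtain rfl | hab := eq_or_lt_of_le hab
  · exact .inl hac
  obtain rfl | hac := eq_or_lt_of_le hac
  · exact .inr hab.le
  obtain ⟨b', hb', hb'b⟩ := exists_covBy_le_of_lt hab
  obtain ⟨c', hc', hc'c⟩ := exists_covBy_le_of_lt hac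
  obtain rfl := h a b' c' hb' hc'
  exact ih b' hb'.lt hb'b hc'c hbc

theorem isChain_Ici_of_existsUnique_covBy [OrderTop α] [Finite α]
    (h : ∀ a : α, a ≠ ⊤ → ∃! b, a ⋖ b) (a : α) : IsChain (· ≤ ·) (Set.Ici a) :=
  isChain_Ici_of_covBy_unique (fun a _ _ hb hc => (h a (ne_top_of_lt hb.lt)).unique hb hc) a

theorem isChain_Ici_subtype (hα : ∀ a : α, IsChain (· ≤ ·) (Set.Ici a)) (p : α → Prop)
    (a : {a // p a}) : IsChain (· ≤ ·) (Set.Ici a) :=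
  fun _ hb _ hc hbc => hα a hb hc (Subtype.coe_injective.ne hbc)

end Tree

section Forest

variable {α : Type*} [PartialOrder α] (hα : ∀ a : α, IsChain (· ≤ ·) (Set.Ici a))
include hα

theorem forall_symmGen_of_le {a b : α} (ha : ∀ c, SymmGen (· ≤ ·) a c) (hab : a ≤ b) (c : α) :
    SymmGen (· ≤ ·) b c := by
  rcases ha c with hac | hca
  · rcases eq_or_ne b c with rfl | hbc
    · exact .of_le le_rfl
    · exact hα a hab hac hbc
  · exact .of_ge (hca.trans hab)

theorem le_of_forall_symmGen {a b : α} (ha : ¬ ∀ c, SymmGen (· ≤ ·) a c)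
    (hb : ∀ c, SymmGen (· ≤ ·) b c) : a ≤ b :=
  (hb a).resolve_left fun hba => ha (forall_symmGen_of_le hα hb hba)

theorem IsMax.incompRel_of_le {m a b : α} (hm : IsMax m) (ha : a ≤ m) (hb : ¬ b ≤ m) :
    IncompRel (· ≤ ·) a b := by
  refine ⟨fun hab => hb ?_, fun hba => hb (hba.trans ha)⟩
  rcases eq_or_ne b m with rfl | hbm
  · exact le_rfl
  · exact (hα a hab ha hbm).elim id (@hm b)

end Forest

section Comparability

variable {α β : Type*} [PartialOrder α] [PartialOrder β] (e : α ≃ β)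
  (he : ∀ a b, IncompRel (· ≤ ·) (e a) (e b) ↔ IncompRel (· ≤ ·) a b)
include he

theorem forall_symmGen_apply_iff (a : α) :
    (∀ c, SymmGen (· ≤ ·) (e a) c) ↔ ∀ c, SymmGen (· ≤ ·) a c := by
  rw [← e.forall_congr_right]
  simp only [← not_incompRel_iff_symmGen, he]

theorem nonempty_orderIso_of_incompRel_iff [Finite α]
    (hα : ∀ a : α, IsChain (· ≤ ·) (Set.Ici a)) (hβ : ∀ b : β, IsChain (· ≤ ·) (Set.Ici b)) :
    Nonempty (α ≃o β) := by
  classical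
  induction hn : Nat.card α using Nat.strong_induction_on generalizing α β with
  | _ n ih =>
  have restrict (p : α → Prop) (q : β → Prop) (hpq : ∀ a, p a ↔ q (e a)) (hp : ∃ a, ¬ p a) :
      Nonempty ({a // p a} ≃o {b // q b}) :=
    ih _ (hn ▸ Finite.card_subtype_lt hp.choose_spec) (e.subtypeEquiv hpq) (fun a b => he a b)
      (isChain_Ici_subtype hα p) (isChain_Ici_subtype hβ q) rfl
  rcases isEmpty_or_nonempty α with hα₀ | ⟨⟨a₀⟩⟩
  · have := e.isEmpty_congr.1 hα₀
    exact ⟨OrderIso.ofIsEmpty α β⟩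
  by_cases hu : ∃ u : α, ∀ c, SymmGen (· ≤ ·) u c
  · let p (a : α) := ∀ c, SymmGen (· ≤ ·) a c
    let q (b : β) := ∀ c, SymmGen (· ≤ ·) b c
    have hpq (a : α) : p a ↔ q (e a) := (forall_symmGen_apply_iff e he a).symm
    obtain ⟨f⟩ := restrict (¬ p ·) (¬ q ·) (fun a => not_congr (hpq a))
      (hu.imp fun _ => not_not.2)
    obtain ⟨g⟩ := nonempty_orderIso_of_forall_symmGen (fun a b => a.2 b) (fun a b => a.2 b)
      (e.subtypeEquiv hpq)
    exact ⟨(OrderIso.sumLexComplOfLE p fun _ _ => le_of_forall_symmGen hα).symm.trans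
      ((f.sumLexCongr g).trans (OrderIso.sumLexComplOfLE q fun _ _ => le_of_forall_symmGen hβ))⟩
  · push Not at hu
    obtain ⟨m, -, hm⟩ := Finite.exists_le_maximal (p := fun _ => True) (a := a₀) trivial
    let p (a : α) := a ≤ m
    let q (b : β) := e.symm b ≤ m
    have hp (a b : α) : p a → ¬ p b → IncompRel (· ≤ ·) a b :=
      (maximal_true.1 hm).incompRel_of_le hα
    have hq (a b : β) (ha : q a) (hb : ¬ q b) : IncompRel (· ≤ ·) a b := by
      simpa using (he (e.symm a) (e.symm b)).2 (hp _ _ ha hb)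
    obtain ⟨f⟩ := restrict p q (by simp [p, q]) ((hu m).imp fun _ hc h => hc (.of_ge h))
    obtain ⟨g⟩ := restrict (¬ p ·) (¬ q ·) (by simp [p, q]) ⟨m, not_not.2 le_rfl⟩
    exact ⟨(OrderIso.sumComplOfIncompRel p hp).symm.trans
      ((f.sumCongr g).trans (OrderIso.sumComplOfIncompRel q hq))⟩

end Comparability

theorem stmt18_general {T₁ T₂ : Type*}
    [PartialOrder T₁] [Fintype T₁] [OrderTop T₁]
    [PartialOrder T₂] [Fintype T₂] [OrderTop T₂]
    (h₁ : ∀ x : T₁, x ≠ ⊤ → ∃! y : T₁, x ⋖ y)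
    (h₂ : ∀ x : T₂, x ≠ ⊤ → ∃! y : T₂, x ⋖ y) :
    Nonempty (nonAncestorGraph T₁ ≃g nonAncestorGraph T₂) ↔ Nonempty (T₁ ≃o T₂) := by
  classical
  constructor
  · rintro ⟨f⟩
    obtain ⟨g⟩ := nonempty_orderIso_of_incompRel_iff f.toEquiv (fun _ _ => f.map_adj_iff)
      (isChain_Ici_subtype (isChain_Ici_of_existsUnique_covBy h₁) _)
      (isChain_Ici_subtype (isChain_Ici_of_existsUnique_covBy h₂) _)
    exact ⟨(OrderIso.sumLexComplOfLE (· = ⊤) fun _ _ _ hb => hb ▸ le_top).symm.trans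
      ((g.sumLexCongr (OrderIso.ofUnique _ _)).trans
        (OrderIso.sumLexComplOfLE (· = ⊤) fun _ _ _ hb => hb ▸ le_top))⟩
  · rintro ⟨o⟩
    exact ⟨⟨o.toEquiv.subtypeEquiv fun _ => (map_eq_top_iff o).not.symm,
      by simp [nonAncestorGraph]⟩⟩

/-- For finite rooted trees (encoded via their ancestor orders: finite partial orders with a
top where every non-top element has a unique upper cover) whose roots each have at least two
children, the non-ancestor graphs are isomorphic iff the trees are isomorphic. -/
theorem stmt18 {T₁ T₂ : Type*}
    [PartialOrder T₁] [Fintype T₁] [OrderTop T₁]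
    [PartialOrder T₂] [Fintype T₂] [OrderTop T₂]
    (h₁ : ∀ x : T₁, x ≠ ⊤ → ∃! y : T₁, x ⋖ y)
    (h₂ : ∀ x : T₂, x ≠ ⊤ → ∃! y : T₂, x ⋖ y)
    (hr₁ : ∃ a b : T₁, a ≠ b ∧ a ⋖ ⊤ ∧ b ⋖ ⊤)
    (hr₂ : ∃ a b : T₂, a ≠ b ∧ a ⋖ ⊤ ∧ b ⋖ ⊤) :
    Nonempty (nonAncestorGraph T₁ ≃g nonAncestorGraph T₂) ↔ Nonempty (T₁ ≃o T₂) :=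
  stmt18_general h₁ h₂
end
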